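/- Uniform upper bound for large moneyness: for k ≥ 0 and (1-e^k)^+ ≤ c < 1, Y_BS(k,c) ≤ Φ^{-1}(c + e^k·Φ(-√(2k))) + √(2k), with the convention Φ^{-1}(u) = +∞ for u ≥ 1. -/

import Mathlib

open MeasureTheory Real Filter Asymptotics Set

/-- Standard normal density. -/
noncomputable def phi (z : ℝ) : ℝ := (Real.sqrt (2 * Real.pi))⁻¹ * Real.exp (-z ^ 2 / 2)

/-- Standard normal CDF. -/
noncomputable def Phi (x : ℝ) : ℝ := ∫ z in Set.Iic x, phi z

/-- Black–Scholes normalized call price. -/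
noncomputable def CBS (k y : ℝ) : ℝ :=
  if 0 < y then Phi (-k / y + y / 2) - Real.exp k * Phi (-k / y - y / 2)
  else max (1 - Real.exp k) 0

/-- Implied total standard deviation: inverse of `CBS k` on `[0,∞)`. -/
noncomputable def YBS (k c : ℝ) : ℝ := sInf {y : ℝ | 0 ≤ y ∧ CBS k y = c}

/-- Inverse of the standard normal CDF on (0,1). -/
noncomputable def PhiInv (u : ℝ) : ℝ := sInf {x : ℝ | u ≤ Phi x}

/-- Extended-real quantile with the convention `Φ⁻¹(u) = +∞` for `u ≥ 1`, `-∞` for `u ≤ 0`. -/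
noncomputable def PhiInvE (u : ℝ) : EReal :=
  if 1 ≤ u then ⊤ else if u ≤ 0 then ⊥ else ((PhiInv u : ℝ) : EReal)

open Topology ProbabilityTheory

/-! The Black–Scholes price has the variational form `C_BS(k, y) = max_x (Φ(x + y) - eᵏ Φ(x))`.
Taking `x = -√(2k)` and `y = Φ⁻¹(c + eᵏ Φ(-√(2k))) + √(2k)`, which is `≥ 0` because `eᵏ ≥ 1`, gives
`C_BS(k, y) ≥ c`; as `C_BS(k, ·)` is nondecreasing on `[0, ∞)`, this forces `Y_BS(k, c) ≤ y`. -/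

lemma phi_eq_gaussianPDFReal : phi = gaussianPDFReal 0 1 := by
  ext x
  simp [phi, gaussianPDFReal]

lemma phi_pos (x : ℝ) : 0 < phi x := by
  rw [phi_eq_gaussianPDFReal]; exact gaussianPDFReal_pos 0 1 x one_ne_zero

lemma integrable_phi : Integrable phi := by
  rw [phi_eq_gaussianPDFReal]; exact integrable_gaussianPDFReal 0 1

lemma continuous_phi : Continuous phi := by
  unfold phi; fun_prop

lemma Phi_eq_cdf : Phi = cdf (gaussianReal 0 1) := by
  ext x
  rw [cdf_eq_real, measureReal_def, gaussianReal_apply_eq_integral 0 one_ne_zero,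
    ENNReal.toReal_ofReal (setIntegral_nonneg measurableSet_Iic
      fun z _ => gaussianPDFReal_nonneg 0 1 z), Phi, phi_eq_gaussianPDFReal]

lemma Phi_nonneg (x : ℝ) : 0 ≤ Phi x := Phi_eq_cdf ▸ cdf_nonneg _ x

lemma Phi_le_one (x : ℝ) : Phi x ≤ 1 := Phi_eq_cdf ▸ cdf_le_one _ x

lemma tendsto_Phi_atBot : Tendsto Phi atBot (𝓝 0) := Phi_eq_cdf ▸ tendsto_cdf_atBot _

lemma tendsto_Phi_atTop : Tendsto Phi atTop (𝓝 1) := Phi_eq_cdf ▸ tendsto_cdf_atTop _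

lemma hasDerivAt_Phi (x : ℝ) : HasDerivAt Phi (phi x) x := by
  have hPhi : (fun x => Phi 0 + ∫ t in (0 : ℝ)..x, phi t) = Phi := by
    ext x
    rw [Phi, Phi, intervalIntegral.integral_Iic_sub_Iic integrable_phi.integrableOn
      integrable_phi.integrableOn |>.symm]
    ring
  rw [← hPhi]
  exact (intervalIntegral.integral_hasDerivAt_right integrable_phi.intervalIntegrable
    (continuous_phi.stronglyMeasurableAtFilter _ _) continuous_phi.continuousAt).const_add _

lemma continuous_Phi : Continuous Phi :=
  continuous_iff_continuousAt.2 fun x => (hasDerivAt_Phi x).continuousAt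

lemma Phi_strictMono : StrictMono Phi := strictMono_of_hasDerivAt_pos hasDerivAt_Phi phi_pos

lemma Phi_pos (x : ℝ) : 0 < Phi x :=
  (Phi_nonneg (x - 1)).trans_lt (Phi_strictMono (sub_one_lt x))

lemma Phi_PhiInv {u : ℝ} (h0 : 0 < u) (h1 : u < 1) : Phi (PhiInv u) = u := by
  obtain ⟨a, ha⟩ := (tendsto_Phi_atBot.eventually_lt_const h0).exists
  obtain ⟨b, hb⟩ := (tendsto_Phi_atTop.eventually_const_lt h1).exists
  obtain ⟨x, hx⟩ := intermediate_value_univ a b continuous_Phi ⟨ha.le, hb.le⟩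
  have hset : {x' : ℝ | u ≤ Phi x'} = Ici x := by
    ext x'
    rw [mem_ofPred_eq, mem_Ici, ← hx, Phi_strictMono.le_iff_le]
  rw [PhiInv, hset, csInf_Ici, hx]

section CBS

variable {k y t : ℝ}

lemma phi_add (hy : y ≠ 0) (t : ℝ) :
    phi (t + y) = Real.exp (k - y * (t - (-k / y - y / 2))) * phi t := by
  unfold phi
  rw [mul_left_comm, ← Real.exp_add]
  congr 2
  field_simp
  ring

lemma exp_mul_phi_le_phi_add (hy : 0 < y) (ht : t ≤ -k / y - y / 2) :
    Real.exp k * phi t ≤ phi (t + y) := by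
  rw [phi_add (k := k) hy.ne']
  refine mul_le_mul_of_nonneg_right (Real.exp_le_exp.2 ?_) (phi_pos t).le
  linarith [mul_nonpos_of_nonneg_of_nonpos hy.le (sub_nonpos.2 ht)]

lemma phi_add_le_exp_mul_phi (hy : 0 < y) (ht : -k / y - y / 2 ≤ t) :
    phi (t + y) ≤ Real.exp k * phi t := by
  rw [phi_add (k := k) hy.ne']
  refine mul_le_mul_of_nonneg_right (Real.exp_le_exp.2 ?_) (phi_pos t).le
  linarith [mul_nonneg hy.le (sub_nonneg.2 ht)]

lemma CBS_eq_of_pos (hy : 0 < y) :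
    CBS k y = Phi (-k / y - y / 2 + y) - Real.exp k * Phi (-k / y - y / 2) := by
  rw [CBS, if_pos hy, show -k / y - y / 2 + y = -k / y + y / 2 by ring]

lemma Phi_add_sub_exp_mul_Phi_le_CBS (k x : ℝ) (hy : 0 ≤ y) :
    Phi (x + y) - Real.exp k * Phi x ≤ CBS k y := by
  rcases hy.eq_or_lt with rfl | hy
  · rw [CBS, if_neg (lt_irrefl 0), add_zero, ← one_sub_mul]
    rcases le_total 0 (1 - Real.exp k) with h | h
    · exact (mul_le_of_le_one_right h (Phi_le_one x)).trans (le_max_left _ _)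
    · exact (mul_nonpos_of_nonpos_of_nonneg h (Phi_nonneg x)).trans (le_max_right _ _)
  set x₀ := -k / y - y / 2
  set f : ℝ → ℝ := fun x => Phi (x + y) - Real.exp k * Phi x
  have hf : ∀ x, HasDerivAt f (phi (x + y) - Real.exp k * phi x) x := fun x =>
    ((hasDerivAt_Phi (x + y)).comp_add_const x y).sub ((hasDerivAt_Phi x).const_mul _)
  have hfc : Continuous f := continuous_iff_continuousAt.2 fun x => (hf x).continuousAt
  -- `f' = φ(· + y) - eᵏ φ` changes sign from `+` to `-` at `x₀`, and `f x₀ = CBS k y`.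
  rw [CBS_eq_of_pos hy]
  rcases le_total x x₀ with hx | hx
  · refine monotoneOn_of_hasDerivWithinAt_nonneg (convex_Iic x₀) hfc.continuousOn
      (fun t _ => (hf t).hasDerivWithinAt) (fun t ht => ?_) hx self_mem_Iic hx
    rw [interior_Iic] at ht
    exact sub_nonneg.2 (exp_mul_phi_le_phi_add hy ht.le)
  · refine antitoneOn_of_hasDerivWithinAt_nonpos (convex_Ici x₀) hfc.continuousOn
      (fun t _ => (hf t).hasDerivWithinAt) (fun t ht => ?_) self_mem_Ici hx hx
    rw [interior_Ici] at ht
    exact sub_nonpos.2 (phi_add_le_exp_mul_phi hy ht.le)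

lemma CBS_nonneg (hy : 0 ≤ y) : 0 ≤ CBS k y := by
  have hlim : Tendsto (fun x => Phi (x + y) - Real.exp k * Phi x) atBot (𝓝 0) := by
    simpa using ((tendsto_Phi_atBot.comp (tendsto_atBot_add_const_right _ y tendsto_id)).sub
      (tendsto_Phi_atBot.const_mul (Real.exp k)))
  exact le_of_tendsto' hlim fun x => Phi_add_sub_exp_mul_Phi_le_CBS k x hy

lemma CBS_zero (hk : 0 ≤ k) : CBS k 0 = 0 := by
  rw [CBS, if_neg (lt_irrefl 0)]
  exact max_eq_right (by linarith [Real.one_le_exp hk])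

lemma monotoneOn_CBS (hk : 0 ≤ k) : MonotoneOn (CBS k) (Ici 0) := by
  intro a ha b hb hab
  rcases (show (0 : ℝ) ≤ a from ha).eq_or_lt with rfl | ha
  · rw [CBS_zero hk]
    exact CBS_nonneg hb
  · rw [CBS_eq_of_pos ha]
    calc _ ≤ Phi (-k / a - a / 2 + b) - Real.exp k * Phi (-k / a - a / 2) := by
          gcongr
          exact Phi_strictMono.monotone (by linarith)
      _ ≤ CBS k b := Phi_add_sub_exp_mul_Phi_le_CBS k _ hb

lemma YBS_le_of_le_CBS {c : ℝ} (hk : 0 ≤ k) (hy : 0 ≤ y) (hc : c ≤ CBS k y) : YBS k c ≤ y := by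
  unfold YBS
  set S := {y' : ℝ | 0 ≤ y' ∧ CBS k y' = c}
  have hbdd : BddBelow S := ⟨0, fun _ h => h.1⟩
  by_cases hS : ∃ y₀ ∈ S, y₀ ≤ y
  · obtain ⟨y₀, hy₀, hle⟩ := hS
    exact (csInf_le hbdd hy₀).trans hle
  push Not at hS
  rcases S.eq_empty_or_nonempty with hempty | ⟨y₀, hy₀⟩
  · rw [hempty, Real.sInf_empty]
    exact hy
  · have hmono := monotoneOn_CBS hk hy hy₀.1 (hS y₀ hy₀).le
    exact absurd (hS y ⟨hy, le_antisymm (hy₀.2 ▸ hmono) hc⟩) (lt_irrefl y)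

end CBS

theorem stmt_18_general (k c : ℝ) (hk : 0 ≤ k) (hc : max (1 - Real.exp k) 0 ≤ c) :
    ((YBS k c : ℝ) : EReal) ≤
      PhiInvE (c + Real.exp k * Phi (-Real.sqrt (2 * k))) +
        ((Real.sqrt (2 * k) : ℝ) : EReal) := by
  set s := Real.sqrt (2 * k)
  set u := c + Real.exp k * Phi (-s)
  have hc0 : 0 ≤ c := (le_max_right _ _).trans hc
  have hek : 1 ≤ Real.exp k := Real.one_le_exp hk
  have hu0 : 0 < u := by nlinarith [Phi_pos (-s)]
  rcases le_or_gt 1 u with hu1 | hu1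
  · rw [PhiInvE, if_pos hu1, EReal.top_add_coe]
    exact le_top
  rw [PhiInvE, if_neg hu1.not_ge, if_neg hu0.not_ge, ← EReal.coe_add, EReal.coe_le_coe_iff]
  have hPhi := Phi_PhiInv hu0 hu1
  have hs : -s ≤ PhiInv u := Phi_strictMono.le_iff_le.1 (by nlinarith [Phi_pos (-s)])
  refine YBS_le_of_le_CBS hk (by linarith) ?_
  have := Phi_add_sub_exp_mul_Phi_le_CBS k (-s) (y := PhiInv u + s) (by linarith)
  rw [show -s + (PhiInv u + s) = PhiInv u by ring, hPhi] at this
  linarith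

theorem stmt_18 (k c : ℝ) (hk : 0 ≤ k) (hc : max (1 - Real.exp k) 0 ≤ c) (hc1 : c < 1) :
    ((YBS k c : ℝ) : EReal) ≤
      PhiInvE (c + Real.exp k * Phi (-Real.sqrt (2 * k))) +
        ((Real.sqrt (2 * k) : ℝ) : EReal) :=
  stmt_18_general k c hk hc
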